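/- For every integer n >= 2, (alpha+1) P_n^{(alpha+1,alpha+1)}(x) - (n+alpha+1) P_n^{(alpha,alpha)}(x) = (1/4)(n+alpha+1)(1-x^2) P_{n-2}^{(alpha+2,alpha+2)}(x). -/

import Mathlib

noncomputable def poch (a : ℝ) (k : ℕ) : ℝ := ∏ m ∈ Finset.range k, (a + m)

noncomputable def lag (α : ℝ) (n : ℕ) (x : ℝ) : ℝ :=
  ∑ k ∈ Finset.range (n + 1),
    (-1) ^ k * (poch (α + k + 1) (n - k) / (n - k).factorial) * x ^ k / k.factorial

noncomputable def jacobi (α β : ℝ) (n : ℕ) (x : ℝ) : ℝ :=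
  ∑ k ∈ Finset.range (n + 1),
    poch ((n : ℝ) + α + β + 1) k * poch (α + k + 1) (n - k) /
      (k.factorial * (n - k).factorial) * ((x - 1) / 2) ^ k

noncomputable def charlier (a : ℝ) (n : ℕ) (x : ℝ) : ℝ :=
  ∑ m ∈ Finset.range (n + 1),
    (∏ j ∈ Finset.range m, (x - (j : ℝ))) / m.factorial * (-a) ^ (n - m) / (n - m).factorial


/-!
Put `y = (x - 1) / 2`, so that each `jacobi` is a polynomial in `y` and
`1 - x ^ 2 = -4 (y ^ 2 + y)`. Writing `A_k`, `B_k`, `C_k` for the coefficients of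
`P_n^(α+1,α+1)`, `P_n^(α,α)`, `P_(n-2)^(α+2,α+2)`, the identity says
`(α + 1) A_k - (n + α + 1) B_k = -(n + α + 1) (C_(k-1) + C_(k-2))` for every `k`, with the
missing `C`'s at both ends read as zero. Each such relation is a rational identity once the
Pochhammer symbols are split off to common factors.
-/

open Finset Nat

lemma poch_zero (a : ℝ) : poch a 0 = 1 := prod_range_zero _

lemma poch_succ_right (a : ℝ) (k : ℕ) : poch a (k + 1) = poch a k * (a + k) :=
  prod_range_succ _ _

lemma poch_succ_left (a : ℝ) (k : ℕ) : poch a (k + 1) = a * poch (a + 1) k := by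
  simp only [poch, prod_range_succ', cast_zero, add_zero, cast_succ]
  rw [mul_comm]
  congr 1
  exact prod_congr rfl fun i _ => by ring

/-- The coefficient of `((x - 1) / 2) ^ k` in `jacobi a b (k + j) x`; indexing by `j = n - k`
avoids truncated subtraction. -/
noncomputable def jacobiCoeff (a b : ℝ) (k j : ℕ) : ℝ :=
  poch (k + j + a + b + 1) k * poch (a + k + 1) j / (k ! * j !)

lemma jacobi_eq_sum (a b : ℝ) (n : ℕ) (x : ℝ) :
    jacobi a b n x = ∑ k ∈ range (n + 1), jacobiCoeff a b k (n - k) * ((x - 1) / 2) ^ k := by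
  refine sum_congr rfl fun k hk => ?_
  have hkn : (k : ℝ) + ((n - k : ℕ) : ℝ) = n := by
    rw [Nat.cast_sub (by simpa [Nat.lt_succ_iff] using hk)]; ring
  rw [jacobiCoeff, hkn]

lemma sum_mul_pow_eq_sq_add_self_mul_sum {R : Type*} [CommRing R]
    (a c : ℕ → R) (m : ℕ) (y : R)
    (h0 : a 0 = 0) (h1 : a 1 = c 0) (hmid : ∀ i < m, a (i + 2) = c (i + 1) + c i)
    (htop : a (m + 2) = c m) :
    ∑ k ∈ range (m + 3), a k * y ^ k = (y ^ 2 + y) * ∑ i ∈ range (m + 1), c i * y ^ i := by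
  have hlow : ∑ i ∈ range (m + 1), c i * y ^ (i + 1)
      = c 0 * y + ∑ i ∈ range m, c (i + 1) * y ^ (i + 2) := by
    rw [sum_range_succ']; ring
  have hhigh : ∑ i ∈ range (m + 1), c i * y ^ (i + 2)
      = ∑ i ∈ range m, c i * y ^ (i + 2) + c m * y ^ (m + 2) := sum_range_succ _ _
  have hsplit : ∑ i ∈ range m, a (i + 2) * y ^ (i + 2)
      = ∑ i ∈ range m, c (i + 1) * y ^ (i + 2) + ∑ i ∈ range m, c i * y ^ (i + 2) := by
    rw [← sum_add_distrib]
    exact sum_congr rfl fun i hi => by rw [hmid i (mem_range.mp hi)]; ring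
  calc ∑ k ∈ range (m + 3), a k * y ^ k
      = a 0 + a 1 * y + ∑ i ∈ range m, a (i + 2) * y ^ (i + 2) + a (m + 2) * y ^ (m + 2) := by
        rw [sum_range_succ, sum_range_succ', sum_range_succ']; simp only [pow_zero]; ring
    _ = ∑ i ∈ range (m + 1), c i * y ^ (i + 1)
          + ∑ i ∈ range (m + 1), c i * y ^ (i + 2) := by
        rw [hlow, hhigh, hsplit, h0, h1, htop]; ring
    _ = (y ^ 2 + y) * ∑ i ∈ range (m + 1), c i * y ^ i := by
        rw [mul_sum, ← sum_add_distrib]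
        exact sum_congr rfl fun i _ => by ring

section CoefficientRelations

variable (α : ℝ)

lemma jacobiCoeff_relation_zero (j : ℕ) :
    (α + 1) * jacobiCoeff (α + 1) (α + 1) 0 j - (j + α + 1) * jacobiCoeff α α 0 j = 0 := by
  have h : (α + 1) * poch (α + 1 + 1) j = poch (α + 1) j * (α + 1 + j) := by
    rw [← poch_succ_left, poch_succ_right]
  simp only [jacobiCoeff, poch_zero, cast_zero, add_zero]
  rw [mul_div_assoc', one_mul, h]
  ring

lemma jacobiCoeff_relation_one (l : ℕ) :
    (α + 1) * jacobiCoeff (α + 1) (α + 1) 1 (l + 1) - (l + α + 3) * jacobiCoeff α α 1 (l + 1)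
      = -(l + α + 3) * jacobiCoeff (α + 2) (α + 2) 0 l := by
  simp only [jacobiCoeff]
  push_cast
  rw [poch_succ_right (α + 1 + 1 + 1), poch_succ_left (α + 1 + 1)]
  simp only [poch_succ_right, poch_zero, factorial_succ]
  push_cast
  ring_nf
  field_simp
  ring

lemma jacobiCoeff_relation_add_two_succ (i l : ℕ) :
    (α + 1) * jacobiCoeff (α + 1) (α + 1) (i + 2) (l + 1)
      - (i + l + α + 4) * jacobiCoeff α α (i + 2) (l + 1)
      = -(i + l + α + 4) * (jacobiCoeff (α + 2) (α + 2) (i + 1) l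
          + jacobiCoeff (α + 2) (α + 2) i (l + 1)) := by
  simp only [jacobiCoeff]
  push_cast
  -- every Pochhammer symbol becomes a multiple of `poch (i + l + 2α + 6) i`
  -- or of `poch (α + i + 4) l`
  rw [poch_succ_left (_ + _ + α + α + 1), poch_succ_left (_ + _ + α + α + 1 + 1),
    poch_succ_right (α + 1 + _ + 1), poch_succ_left (α + _ + 1),
    poch_succ_right (_ + _ + (α + 1) + (α + 1) + 1),
    poch_succ_right (_ + _ + (α + 1) + (α + 1) + 1),
    poch_succ_right (_ + _ + (α + 2) + (α + 2) + 1), poch_succ_left (α + 2 + _ + 1)]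
  simp only [factorial_succ]
  push_cast
  ring_nf
  field_simp
  ring

lemma jacobiCoeff_relation_add_two_zero (i : ℕ) :
    (α + 1) * jacobiCoeff (α + 1) (α + 1) (i + 2) 0 - (i + α + 3) * jacobiCoeff α α (i + 2) 0
      = -(i + α + 3) * jacobiCoeff (α + 2) (α + 2) i 0 := by
  simp only [jacobiCoeff]
  push_cast
  rw [poch_succ_left (_ + _ + α + α + 1), poch_succ_left (_ + _ + α + α + 1 + 1)]
  simp only [poch_succ_right, poch_zero, factorial_succ]
  push_cast
  ring_nf
  field_simp
  ring

lemma sum_jacobiCoeff_ultraspherical (m : ℕ) (y : ℝ) :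
    (α + 1) * ∑ k ∈ range (m + 3), jacobiCoeff (α + 1) (α + 1) k (m + 2 - k) * y ^ k
      - (m + α + 3) * ∑ k ∈ range (m + 3), jacobiCoeff α α k (m + 2 - k) * y ^ k
      = -(m + α + 3) * ((y ^ 2 + y) *
          ∑ i ∈ range (m + 1), jacobiCoeff (α + 2) (α + 2) i (m - i) * y ^ i) := by
  convert sum_mul_pow_eq_sq_add_self_mul_sum
    (fun k => (α + 1) * jacobiCoeff (α + 1) (α + 1) k (m + 2 - k)
      - (m + α + 3) * jacobiCoeff α α k (m + 2 - k))
    (fun i => -(m + α + 3) * jacobiCoeff (α + 2) (α + 2) i (m - i)) m y ?_ ?_ ?_ ?_ using 1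
  · rw [mul_sum, mul_sum, ← sum_sub_distrib]
    exact sum_congr rfl fun _ _ => by ring
  · rw [mul_sum, mul_sum, mul_sum]
    exact sum_congr rfl fun _ _ => by ring
  · linear_combination (norm := (push_cast; ring1)) jacobiCoeff_relation_zero α (m + 2)
  · rw [Nat.sub_zero]
    linear_combination (norm := (push_cast; ring1)) jacobiCoeff_relation_one α m
  · intro i hi
    obtain ⟨l, rfl⟩ : ∃ l, m = i + l + 1 := ⟨m - i - 1, by omega⟩
    rw [show i + l + 1 + 2 - (i + 2) = l + 1 by omega, show i + l + 1 - (i + 1) = l by omega,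
      show i + l + 1 - i = l + 1 by omega]
    linear_combination (norm := (push_cast; ring1)) jacobiCoeff_relation_add_two_succ α i l
  · rw [Nat.sub_self, Nat.sub_self]
    linear_combination (norm := (push_cast; ring1)) jacobiCoeff_relation_add_two_zero α m

end CoefficientRelations

theorem stmt9 (α x : ℝ) (n : ℕ) (hn : 2 ≤ n) :
    (α + 1) * jacobi (α + 1) (α + 1) n x - (n + α + 1) * jacobi α α n x =
      (1 / 4) * (n + α + 1) * (1 - x ^ 2) * jacobi (α + 2) (α + 2) (n - 2) x := by
  obtain ⟨m, rfl⟩ : ∃ m, n = m + 2 := ⟨n - 2, by omega⟩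
  rw [jacobi_eq_sum, jacobi_eq_sum, jacobi_eq_sum, Nat.add_sub_cancel]
  linear_combination (norm := (push_cast; ring1)) sum_jacobiCoeff_ultraspherical α m ((x - 1) / 2)
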